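/- arXiv:2502.19775 — 4 statements merged into one kernel-verified Lean document; each statement's English description precedes it below -/
import Mathlib

section
/- For every f ∈ C_c^∞(ℝ²) one has the identity ∫_{ℝ²} U |∇(f/U)|² = ∫_{ℝ²} |∇f|²/U − ∫_{ℝ²} f². -/
open MeasureTheory

noncomputable section

abbrev E2 : Type := EuclideanSpace ℝ (Fin 2)

/-- The stationary state `U(y) = 8 / (1 + |y|²)²`. -/
def U2 (y : E2) : ℝ := 8 / (1 + ‖y‖ ^ 2) ^ 2

def Nf (y : E2) : ℝ := 1 + ‖y‖ ^ 2

lemma Nf_pos (y : E2) : 0 < Nf y := by unfold Nf; positivity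
lemma Nf_ne (y : E2) : Nf y ≠ 0 := (Nf_pos y).ne'

lemma hasFDerivAt_Nf (y : E2) :
    HasFDerivAt Nf ((2:ℝ) • (innerSL ℝ y : E2 →L[ℝ] ℝ)) y := by
  have h : HasFDerivAt (fun z : E2 => (inner ℝ z z : ℝ))
      ((fderivInnerCLM ℝ (y, y)).comp ((ContinuousLinearMap.id ℝ E2).prod
        (ContinuousLinearMap.id ℝ E2))) y :=
    (hasFDerivAt_id y).inner ℝ (hasFDerivAt_id y)
  have h2 : HasFDerivAt (fun z : E2 => 1 + (inner ℝ z z : ℝ)) _ y := h.const_add 1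
  have e : Nf = fun z : E2 => 1 + (inner ℝ z z : ℝ) := by
    funext z; unfold Nf; rw [real_inner_self_eq_norm_sq]
  rw [e]; refine h2.congr_fderiv ?_
  · ext v
    simp [fderivInnerCLM_apply, real_inner_comm, two_mul]

lemma contDiff_Nf : ContDiff ℝ (⊤ : ℕ∞) Nf :=
  contDiff_const.add (contDiff_norm_sq ℝ)

lemma contDiff_U2 : ContDiff ℝ (⊤ : ℕ∞) U2 :=
  contDiff_const.div ((contDiff_const.add (contDiff_norm_sq ℝ)).pow 2)
    (fun y => by positivity)

lemma U2_pos (y : E2) : 0 < U2 y := by unfold U2; positivity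

lemma hasFDerivAt_inv_comp {h : E2 → ℝ} {L : E2 →L[ℝ] ℝ} {y : E2}
    (H : HasFDerivAt h L y) (hne : h y ≠ 0) :
    HasFDerivAt (fun z => (h z)⁻¹) ((-((h y) ^ 2)⁻¹) • L) y := by
  have := (hasFDerivAt_inv hne).comp y H
  exact this.congr_fderiv (by ext v; simp [mul_comm])

def pdU (i : Fin 2) (y : E2) : ℝ := -32 * y i / Nf y ^ 3

lemma contDiff_pdU (i : Fin 2) : ContDiff ℝ (⊤ : ℕ∞) (pdU i) := by
  apply ContDiff.div
  · exact contDiff_const.mul (EuclideanSpace.proj (𝕜 := ℝ) (ι := Fin 2) i).contDiff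
  · exact contDiff_Nf.pow 3
  · intro y; exact pow_ne_zero _ (Nf_ne y)

lemma fderiv_U2_apply (y : E2) (i : Fin 2) :
    fderiv ℝ U2 y (EuclideanSpace.single i (1:ℝ)) = pdU i y := by
  have H2 := (hasFDerivAt_Nf y).mul (hasFDerivAt_Nf y)
  have H3 := hasFDerivAt_inv_comp H2 (mul_ne_zero (Nf_ne y) (Nf_ne y))
  have H4 := H3.const_mul (8:ℝ)
  have hU : U2 = fun z => 8 * (Nf z * Nf z)⁻¹ := by
    funext z
    have := Nf_ne z
    unfold U2 Nf at *
    field_simp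
  rw [hU, HasFDerivAt.fderiv (f := fun z => 8 * (Nf z * Nf z)⁻¹) H4]
  have := Nf_ne y
  simp only [ContinuousLinearMap.smul_apply, ContinuousLinearMap.add_apply, smul_eq_mul,
    innerSL_apply_apply, EuclideanSpace.inner_single_right, map_one, pdU,
    starRingEnd_apply, star_trivial, Pi.mul_apply, Pi.pow_apply]
  field_simp
  ring

lemma fderiv_pdU_apply (y : E2) (i : Fin 2) :
    fderiv ℝ (pdU i) y (EuclideanSpace.single i (1:ℝ))
      = (-32 * Nf y + 192 * (y i) ^ 2) / Nf y ^ 4 := by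
  have hnum : HasFDerivAt (fun z : E2 => -32 * z i)
      ((-32 : ℝ) • (EuclideanSpace.proj i : E2 →L[ℝ] ℝ)) y :=
    ((EuclideanSpace.proj i : E2 →L[ℝ] ℝ).hasFDerivAt (x := y)).const_mul (-32 : ℝ)
  have H3 := ((hasFDerivAt_Nf y).mul (hasFDerivAt_Nf y)).mul (hasFDerivAt_Nf y)
  have H4 := hasFDerivAt_inv_comp H3 (by have := Nf_pos y; simp only [Pi.mul_apply]; positivity)
  have H5 := hnum.mul H4
  have hp : pdU i = fun z => (-32 * z i) * (Nf z * Nf z * Nf z)⁻¹ := by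
    funext z
    unfold pdU
    rw [show Nf z * Nf z * Nf z = Nf z ^ 3 by ring, div_eq_mul_inv]
  rw [hp, HasFDerivAt.fderiv (f := fun z => (-32 * z i) * (Nf z * Nf z * Nf z)⁻¹) H5]
  have := Nf_ne y
  simp only [ContinuousLinearMap.add_apply, ContinuousLinearMap.smul_apply, smul_eq_mul,
    innerSL_apply_apply, EuclideanSpace.inner_single_right, map_one, starRingEnd_apply, star_trivial,
    PiLp.proj_apply, EuclideanSpace.single_apply, if_pos rfl, Pi.mul_apply, Pi.pow_apply,
    ↓reduceIte]
  field_simp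
  ring

lemma norm_sq_E2 (v : E2) : ‖v‖^2 = v 0 ^2 + v 1 ^2 := by
  rw [EuclideanSpace.norm_eq, Real.sq_sqrt (by positivity)]
  simp [Fin.sum_univ_two, sq_abs]

lemma gradient_apply (h : E2 → ℝ) (y : E2) (i : Fin 2) :
    (gradient h y) i = fderiv ℝ h y (EuclideanSpace.single i (1:ℝ)) := by
  have : (gradient h y) i = inner ℝ (EuclideanSpace.single i (1:ℝ)) (gradient h y) := by
    simp only [EuclideanSpace.inner_single_left, map_one, one_mul]
  rw [this, real_inner_comm, gradient, InnerProductSpace.toDual_symm_apply]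

lemma grad_norm_sq (h : E2 → ℝ) (y : E2) :
    ‖gradient h y‖^2 = (fderiv ℝ h y (EuclideanSpace.single 0 (1:ℝ)))^2
      + (fderiv ℝ h y (EuclideanSpace.single 1 (1:ℝ)))^2 := by
  rw [norm_sq_E2, gradient_apply, gradient_apply]

lemma cont_pd {h : E2 → ℝ} (hh : ContDiff ℝ (⊤ : ℕ∞) h) (v : E2) :
    Continuous fun y => fderiv ℝ h y v :=
  ((hh.continuous_fderiv (by simp)).clm_apply continuous_const)

lemma integrable_cc {h : E2 → ℝ} (hc : Continuous h) (hs : HasCompactSupport h) :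
    Integrable h (volume : Measure E2) :=
  hc.integrable_of_hasCompactSupport hs

/-- For every `f ∈ C_c^∞(ℝ²)`,
`∫ U |∇(f/U)|² = ∫ |∇f|²/U − ∫ f²`. -/
theorem stmt3 (f : E2 → ℝ) (hf : ContDiff ℝ (⊤ : ℕ∞) f) (hsupp : HasCompactSupport f) :
    ∫ y : E2, U2 y * ‖gradient (fun z => f z / U2 z) y‖ ^ 2
      = (∫ y : E2, ‖gradient f y‖ ^ 2 / U2 y) - ∫ y : E2, (f y) ^ 2 := by
  have hU2ne : ∀ y, U2 y ≠ 0 := fun y => (U2_pos y).ne'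
  set w : E2 → ℝ := fun z => f z / U2 z with hwdef
  have hw : ContDiff ℝ (⊤ : ℕ∞) w := hf.div contDiff_U2 hU2ne
  have hwsupp : HasCompactSupport w := by
    have : w = f * fun z => (U2 z)⁻¹ := funext fun z => div_eq_mul_inv _ _
    rw [this]; exact hsupp.mul_right
  set q : E2 → ℝ := fun y => w y ^ 2 with hqdef
  have hqCD : ContDiff ℝ (⊤ : ℕ∞) q := by
    rw [hqdef]; exact hw.pow 2
  have hqsupp : HasCompactSupport q := by
    have : q = w * w := funext fun z => pow_two (w z)
    rw [this]; exact hwsupp.mul_right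
  have hfw : f = fun z => w z * U2 z := by
    funext z; exact (div_mul_cancel₀ (f z) (hU2ne z)).symm
  -- partial derivatives of f and q
  have hA : ∀ (y : E2) i, fderiv ℝ f y (EuclideanSpace.single i (1:ℝ))
      = U2 y * fderiv ℝ w y (EuclideanSpace.single i (1:ℝ)) + w y * pdU i y := by
    intro y i
    conv_lhs => rw [hfw]
    rw [fderiv_fun_mul (hw.differentiable (by simp) y) (contDiff_U2.differentiable (by simp) y)]
    simp only [ContinuousLinearMap.add_apply, ContinuousLinearMap.smul_apply, smul_eq_mul,
      fderiv_U2_apply]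
    ring
  have hQ : ∀ (y : E2) i, fderiv ℝ q y (EuclideanSpace.single i (1:ℝ))
      = 2 * w y * fderiv ℝ w y (EuclideanSpace.single i (1:ℝ)) := by
    intro y i
    have h2 : q = fun z => w z * w z := funext fun z => pow_two (w z)
    rw [h2, fderiv_fun_mul (hw.differentiable (by simp) y) (hw.differentiable (by simp) y)]
    simp only [ContinuousLinearMap.add_apply, ContinuousLinearMap.smul_apply, smul_eq_mul]
    ring
  -- integrability of all pieces
  have hBc : ∀ v : E2, Continuous fun y => fderiv ℝ w y v := fun v => cont_pd hw v
  have hBs : ∀ v : E2, HasCompactSupport fun y => fderiv ℝ w y v :=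
    fun v => hwsupp.fderiv_apply (𝕜 := ℝ) v
  have it0 : Integrable (fun y : E2 => U2 y * fderiv ℝ w y (EuclideanSpace.single 0 (1:ℝ)) ^ 2) := by
    apply integrable_cc (contDiff_U2.continuous.mul ((hBc (EuclideanSpace.single 0 (1:ℝ))).pow 2))
    have : (fun y : E2 => U2 y * fderiv ℝ w y (EuclideanSpace.single 0 (1:ℝ)) ^ 2)
        = (fun y : E2 => U2 y * fderiv ℝ w y (EuclideanSpace.single 0 (1:ℝ))) * (fun y => fderiv ℝ w y (EuclideanSpace.single 0 (1:ℝ))) :=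
      funext fun y => by simp [Pi.mul_apply]; ring
    rw [show U2 * (fun y => fderiv ℝ w y (EuclideanSpace.single 0 (1:ℝ))) ^ 2 = (fun y : E2 => U2 y * fderiv ℝ w y (EuclideanSpace.single 0 (1:ℝ))) * (fun y => fderiv ℝ w y (EuclideanSpace.single 0 (1:ℝ)))
      from funext fun y => by simp only [Pi.mul_apply, Pi.pow_apply]; ring]
    exact HasCompactSupport.mul_right (HasCompactSupport.mul_left (hBs (EuclideanSpace.single 0 (1:ℝ))))
  have it1 : Integrable (fun y : E2 => U2 y * fderiv ℝ w y (EuclideanSpace.single 1 (1:ℝ)) ^ 2) := by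
    apply integrable_cc (contDiff_U2.continuous.mul ((hBc (EuclideanSpace.single 1 (1:ℝ))).pow 2))
    have : (fun y : E2 => U2 y * fderiv ℝ w y (EuclideanSpace.single 1 (1:ℝ)) ^ 2)
        = (fun y : E2 => U2 y * fderiv ℝ w y (EuclideanSpace.single 1 (1:ℝ))) * (fun y => fderiv ℝ w y (EuclideanSpace.single 1 (1:ℝ))) :=
      funext fun y => by simp [Pi.mul_apply]; ring
    rw [show U2 * (fun y => fderiv ℝ w y (EuclideanSpace.single 1 (1:ℝ))) ^ 2 = (fun y : E2 => U2 y * fderiv ℝ w y (EuclideanSpace.single 1 (1:ℝ))) * (fun y => fderiv ℝ w y (EuclideanSpace.single 1 (1:ℝ)))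
      from funext fun y => by simp only [Pi.mul_apply, Pi.pow_apply]; ring]
    exact HasCompactSupport.mul_right (HasCompactSupport.mul_left (hBs (EuclideanSpace.single 1 (1:ℝ))))
  have ig : ∀ i : Fin 2, Integrable (fun y : E2 =>
      fderiv ℝ q y (EuclideanSpace.single i (1:ℝ)) * pdU i y) := by
    intro i
    apply integrable_cc ((cont_pd hqCD _).mul (contDiff_pdU i).continuous)
    exact HasCompactSupport.mul_right (hqsupp.fderiv_apply (𝕜 := ℝ) _)
  have ih : Integrable (fun y : E2 => q y * ((pdU 0 y ^ 2 + pdU 1 y ^ 2) / U2 y)) := by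
    apply integrable_cc
    · exact hqCD.continuous.mul ((((contDiff_pdU 0).continuous.pow 2).add
        ((contDiff_pdU 1).continuous.pow 2)).div contDiff_U2.continuous hU2ne)
    · exact HasCompactSupport.mul_right hqsupp
  have iqD : ∀ i : Fin 2, Integrable (fun y : E2 =>
      q y * fderiv ℝ (pdU i) y (EuclideanSpace.single i (1:ℝ))) := by
    intro i
    apply integrable_cc (hqCD.continuous.mul (cont_pd (contDiff_pdU i) _))
    exact HasCompactSupport.mul_right hqsupp
  have iqp : ∀ i : Fin 2, Integrable (fun y : E2 => q y * pdU i y) := by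
    intro i
    apply integrable_cc (hqCD.continuous.mul (contDiff_pdU i).continuous)
    exact HasCompactSupport.mul_right hqsupp
  have if2 : Integrable (fun y : E2 => f y ^ 2) := by
    apply integrable_cc (hf.continuous.pow 2)
    have : (fun y : E2 => f y ^ 2) = f * f := funext fun z => pow_two (f z)
    rw [show f ^ 2 = f * f from funext fun z => by simp only [Pi.mul_apply, Pi.pow_apply]; ring]; exact hsupp.mul_right
  -- integration by parts
  have IBP : ∀ i : Fin 2,
      ∫ y : E2, q y * fderiv ℝ (pdU i) y (EuclideanSpace.single i (1:ℝ))
        = - ∫ y : E2, fderiv ℝ q y (EuclideanSpace.single i (1:ℝ)) * pdU i y :=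
    fun i => integral_mul_fderiv_eq_neg_fderiv_mul_of_integrable (ig i) (iqD i) (iqp i)
      (fun x _ => hqCD.differentiable (by simp) x) (fun x _ => (contDiff_pdU i).differentiable (by simp) x)
  -- pointwise identity 1
  have S1 : (fun y : E2 => (fderiv ℝ f y (EuclideanSpace.single 0 (1:ℝ)) ^ 2 + fderiv ℝ f y (EuclideanSpace.single 1 (1:ℝ)) ^ 2) / U2 y)
      = fun y : E2 => U2 y * fderiv ℝ w y (EuclideanSpace.single 0 (1:ℝ)) ^ 2 + (U2 y * fderiv ℝ w y (EuclideanSpace.single 1 (1:ℝ)) ^ 2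
        + (fderiv ℝ q y (EuclideanSpace.single 0 (1:ℝ)) * pdU 0 y + (fderiv ℝ q y (EuclideanSpace.single 1 (1:ℝ)) * pdU 1 y
        + q y * ((pdU 0 y ^ 2 + pdU 1 y ^ 2) / U2 y)))) := by
    funext y
    have h0 := hU2ne y
    rw [hA y 0, hA y 1, hQ y 0, hQ y 1, hqdef]
    field_simp
    ring
  -- pointwise identity 2
  have S2 : ∀ y : E2, q y * ((pdU 0 y ^ 2 + pdU 1 y ^ 2) / U2 y)
      - q y * fderiv ℝ (pdU 0) y (EuclideanSpace.single 0 (1:ℝ))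
      - q y * fderiv ℝ (pdU 1) y (EuclideanSpace.single 1 (1:ℝ)) = f y ^ 2 := by
    intro y
    rw [fderiv_pdU_apply, fderiv_pdU_apply, hfw]
    have hU2 : U2 y = 8 / Nf y ^ 2 := rfl
    have hNf : Nf y = 1 + (y 0 ^ 2 + y 1 ^ 2) := by rw [Nf, norm_sq_E2]
    have hNfne : (1 + (y 0 ^ 2 + y 1 ^ 2) : ℝ) ≠ 0 := by positivity
    simp only [pdU, hU2, hqdef, hNf]
    field_simp
    ring
  -- assemble
  simp only [grad_norm_sq]
  have E2split : ∫ y : E2, U2 y * (fderiv ℝ w y (EuclideanSpace.single 0 (1:ℝ)) ^ 2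
        + fderiv ℝ w y (EuclideanSpace.single 1 (1:ℝ)) ^ 2)
      = (∫ y : E2, U2 y * fderiv ℝ w y (EuclideanSpace.single 0 (1:ℝ)) ^ 2)
        + ∫ y : E2, U2 y * fderiv ℝ w y (EuclideanSpace.single 1 (1:ℝ)) ^ 2 := by
    rw [← integral_add it0 it1]
    congr 1
    funext y
    ring
  have s4 := integral_add (μ := (volume : Measure E2)) (ig 1) ih
  have s3 := integral_add (μ := (volume : Measure E2)) (ig 0) ((ig 1).add ih)
  have s2 := integral_add (μ := (volume : Measure E2)) it1 ((ig 0).add ((ig 1).add ih))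
  have s1 := integral_add (μ := (volume : Measure E2)) it0 (it1.add ((ig 0).add ((ig 1).add ih)))
  simp only [Pi.add_apply] at s1 s2 s3 s4
  have E1 : ∫ y : E2, (fderiv ℝ f y (EuclideanSpace.single 0 (1:ℝ)) ^ 2
        + fderiv ℝ f y (EuclideanSpace.single 1 (1:ℝ)) ^ 2) / U2 y
      = (∫ y : E2, U2 y * fderiv ℝ w y (EuclideanSpace.single 0 (1:ℝ)) ^ 2)
        + ((∫ y : E2, U2 y * fderiv ℝ w y (EuclideanSpace.single 1 (1:ℝ)) ^ 2)
        + ((∫ y : E2, fderiv ℝ q y (EuclideanSpace.single 0 (1:ℝ)) * pdU 0 y)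
        + ((∫ y : E2, fderiv ℝ q y (EuclideanSpace.single 1 (1:ℝ)) * pdU 1 y)
        + ∫ y : E2, q y * ((pdU 0 y ^ 2 + pdU 1 y ^ 2) / U2 y)))) := by
    rw [S1, s1, s2, s3, s4]
  have s5 := integral_sub (μ := (volume : Measure E2)) ih (iqD 0)
  have s6 := integral_sub (μ := (volume : Measure E2)) (ih.sub (iqD 0)) (iqD 1)
  simp only [Pi.sub_apply] at s5 s6
  have E4 : (∫ y : E2, q y * ((pdU 0 y ^ 2 + pdU 1 y ^ 2) / U2 y))
      - (∫ y : E2, q y * fderiv ℝ (pdU 0) y (EuclideanSpace.single 0 (1:ℝ)))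
      - (∫ y : E2, q y * fderiv ℝ (pdU 1) y (EuclideanSpace.single 1 (1:ℝ)))
      = ∫ y : E2, f y ^ 2 := by
    rw [← s5, ← s6]
    exact integral_congr_ae (Filter.Eventually.of_forall fun y => S2 y)
  have IBP0 := IBP 0
  have IBP1 := IBP 1
  rw [E2split, E1]
  linarith [IBP0, IBP1, E4]
end
end

section
/- Let β, δ, K, C₀ > 0, k > 1 and K₁ ≥ 1. There exist constants M̄ > 0 and C' > 0, depending only on β, δ, k, K₁, C₀, such that the following holds for every M₀ ≥ M̄ and every τ* > 0. Suppose ν : [0, τ*] → (0, e^{−1}) is differentiable with (1/K₁) e^{−√(βτ + M₀)} ≤ ν(τ) ≤ K₁ e^{−√(βτ + M₀)} and |ν'(τ)/ν(τ)| ≤ C₀/|log ν(τ)| for all τ ∈ [0, τ*], and f : [0, τ*] → [0, ∞) is differentiable with f'(τ) ≤ −δ f(τ) + K ν(τ)^k/(log ν(τ))² for all τ ∈ [0, τ*]. Then for every τ ∈ [0, τ*]: f(τ) ≤ K ν(τ)^k/(δ (log ν(τ))²) + C' K ν(τ)^k/|log ν(τ)|³ + f(0) e^{−δτ}. -/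
/-!
Write `ℓ = -log ν`, so that `ν ^ k = exp (-k ℓ)`. The function
`A = K exp (-k ℓ) (1 / (δ ℓ²) + C' / ℓ³)` satisfies `A' ≥ -δ A + K ν ^ k / ℓ²`: the first term
balances the forcing up to its derivative, and since the hypothesis on `ν' / ν` says
`ℓ ℓ' ≤ C₀`, `A'` is of order `C₀ ν ^ k / ℓ³`; for `ℓ ≥ √M₀ - log K₁` large this is absorbed by
the damping `δ C' ν ^ k / ℓ³` of the second term. Grönwall's inequality for `f - A` then gives
`f τ ≤ A τ + (f 0 - A 0) e^{-δτ} ≤ A τ + f 0 e^{-δτ}`.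
-/

open Real Set

theorem le_mul_exp_of_hasDerivAt_le_neg_mul {h h' : ℝ → ℝ} {δ a b : ℝ}
    (hd : ∀ t ∈ Icc a b, HasDerivAt h (h' t) t) (hbound : ∀ t ∈ Icc a b, h' t ≤ -δ * h t) :
    ∀ t ∈ Icc a b, h t ≤ h a * exp (-δ * (t - a)) := by
  intro t ht
  have hIco : Ico a b ⊆ Icc a b := Ico_subset_Icc_self
  have := le_gronwallBound_of_liminf_deriv_right_le (δ := h a) (K := -δ) (ε := 0)
    (fun x hx => (hd x hx).continuousAt.continuousWithinAt)
    (fun x hx _ hr => (hd x (hIco hx)).hasDerivWithinAt.liminf_right_slope_le hr)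
    le_rfl (fun x hx => by simpa using hbound x (hIco hx)) t ht
  rwa [gronwallBound_ε0] at this

noncomputable def logProfile (k a b ℓ : ℝ) : ℝ := exp (-k * ℓ) * (a / ℓ ^ 2 + b / ℓ ^ 3)

theorem logProfile_nonneg {k a b ℓ : ℝ} (ha : 0 ≤ a) (hb : 0 ≤ b) (hℓ : 0 ≤ ℓ) :
    0 ≤ logProfile k a b ℓ := by
  unfold logProfile
  positivity

noncomputable def logProfileDeriv (k a b ℓ : ℝ) : ℝ :=
  -exp (-k * ℓ) * (k * a / ℓ ^ 2 + (k * b + 2 * a) / ℓ ^ 3 + 3 * b / ℓ ^ 4)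

theorem hasDerivAt_logProfile (k a b : ℝ) {ℓ : ℝ} (hℓ : ℓ ≠ 0) :
    HasDerivAt (logProfile k a b) (logProfileDeriv k a b ℓ) ℓ := by
  have hexp : HasDerivAt (fun x => exp (-k * x)) (exp (-k * ℓ) * -k) ℓ := by
    simpa using ((hasDerivAt_id ℓ).const_mul (-k)).exp
  have hsum := ((hasDerivAt_const ℓ a).div (hasDerivAt_pow 2 ℓ) (pow_ne_zero 2 hℓ)).add
    ((hasDerivAt_const ℓ b).div (hasDerivAt_pow 3 ℓ) (pow_ne_zero 3 hℓ))
  refine (hexp.mul hsum).congr_deriv ?_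
  simp only [logProfileDeriv, Pi.add_apply, Pi.div_apply]
  field_simp
  ring

theorem exp_div_sq_le_logProfile_add {k δ C₀ ℓ ℓ' : ℝ} (hk : 0 ≤ k) (hδ : 0 < δ)
    (hC₀ : 0 ≤ C₀) (hℓ : 1 ≤ ℓ) (hℓδ : 2 * C₀ * (k + 3) ≤ δ * ℓ) (hℓ' : ℓ * ℓ' ≤ C₀) :
    exp (-k * ℓ) / ℓ ^ 2 ≤ δ * logProfile k δ⁻¹ (2 * C₀ * (k + 2) / δ ^ 2) ℓ
      + logProfileDeriv k δ⁻¹ (2 * C₀ * (k + 2) / δ ^ 2) ℓ * ℓ' := by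
  set C' := 2 * C₀ * (k + 2) / δ ^ 2 with hC'
  have hℓ0 : 0 < ℓ := by linarith
  set D := k * δ⁻¹ / ℓ ^ 2 + (k * C' + 2 * δ⁻¹) / ℓ ^ 3 + 3 * C' / ℓ ^ 4
  have hD : 0 ≤ D := by positivity
  have hℓ'_le : ℓ' ≤ C₀ / ℓ := by
    rw [le_div_iff₀ hℓ0]
    linarith
  -- Half of `δ C'` absorbs the term `C₀ (k + 2) / δ`, the other half, because
  -- `δ ℓ ≥ 2 C₀ (k + 3)`, the terms carrying `C'`.
  have hDC₀ : D * (C₀ / ℓ) ≤ δ * C' / ℓ ^ 3 := by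
    simp only [D, hC']
    field_simp
    have h1 : C₀ * (k * ℓ + 3) ≤ C₀ * (k + 3) * ℓ := by nlinarith
    have h2 : 0 ≤ C₀ * (k + 2) := by positivity
    nlinarith [mul_le_mul_of_nonneg_left hℓδ h2, mul_le_mul_of_nonneg_left h1 h2]
  have hDℓ' : exp (-k * ℓ) * (D * ℓ') ≤ exp (-k * ℓ) * (δ * C' / ℓ ^ 3) :=
    mul_le_mul_of_nonneg_left ((mul_le_mul_of_nonneg_left hℓ'_le hD).trans hDC₀) (exp_pos _).le
  have hprofile : δ * logProfile k δ⁻¹ C' ℓ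
      = exp (-k * ℓ) / ℓ ^ 2 + exp (-k * ℓ) * (δ * C' / ℓ ^ 3) := by
    unfold logProfile
    field_simp
  rw [hprofile, logProfileDeriv]
  linarith

theorem le_logProfile_add_mul_exp {k δ C₀ K a b : ℝ} {ℓ ℓ' f f' : ℝ → ℝ}
    (hk : 0 ≤ k) (hδ : 0 < δ) (hC₀ : 0 ≤ C₀) (hK : 0 ≤ K)
    (hℓd : ∀ t ∈ Icc a b, HasDerivAt ℓ (ℓ' t) t)
    (hℓ : ∀ t ∈ Icc a b, 1 ≤ ℓ t ∧ 2 * C₀ * (k + 3) ≤ δ * ℓ t)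
    (hℓ' : ∀ t ∈ Icc a b, ℓ t * ℓ' t ≤ C₀)
    (hfd : ∀ t ∈ Icc a b, HasDerivAt f (f' t) t)
    (hf' : ∀ t ∈ Icc a b, f' t ≤ -δ * f t + K * exp (-k * ℓ t) / ℓ t ^ 2) :
    ∀ t ∈ Icc a b,
      f t ≤ K * logProfile k δ⁻¹ (2 * C₀ * (k + 2) / δ ^ 2) (ℓ t) + f a * exp (-δ * (t - a)) := by
  set A := fun t => K * logProfile k δ⁻¹ (2 * C₀ * (k + 2) / δ ^ 2) (ℓ t)
  have hAd : ∀ t ∈ Icc a b, HasDerivAt A (K * (_ * ℓ' t)) t := fun t ht =>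
    ((hasDerivAt_logProfile _ _ _ (by linarith [(hℓ t ht).1])).comp t (hℓd t ht)).const_mul K
  have hgron := le_mul_exp_of_hasDerivAt_le_neg_mul (δ := δ)
    (fun t ht => (hfd t ht).sub (hAd t ht)) fun t ht => by
      have hsuper := exp_div_sq_le_logProfile_add hk hδ hC₀ (hℓ t ht).1 (hℓ t ht).2 (hℓ' t ht)
      simp only [Pi.sub_apply, A]
      linear_combination hf' t ht + mul_le_mul_of_nonneg_left hsuper hK
  intro t ht
  have hA : 0 ≤ A a := mul_nonneg hK <| logProfile_nonneg (by positivity) (by positivity)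
    (by linarith [(hℓ a ⟨le_rfl, ht.1.trans ht.2⟩).1])
  have hAexp := mul_nonneg hA (exp_pos (-δ * (t - a))).le
  have hfA := hgron t ht
  simp only [Pi.sub_apply] at hfA
  linarith

theorem le_neg_log_of_le_mul_exp_neg_sqrt {x c R s : ℝ} (hx : 0 < x) (hc : 0 < c)
    (hs : (R + log c) ^ 2 ≤ s) (h : x ≤ c * exp (-√s)) : R ≤ -log x := by
  have hsqrt : R + log c ≤ √s := le_sqrt_of_sq_le hs
  have := log_le_log hx h
  rw [log_mul hc.ne' (exp_pos _).ne', log_exp] at this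
  linarith

theorem mul_logProfile_neg_log {x : ℝ} (hx : 0 < x) (hx1 : log x < 0) (K k δ C' : ℝ) :
    K * logProfile k δ⁻¹ C' (-log x)
      = K * x ^ k / (δ * log x ^ 2) + C' * K * x ^ k / |log x| ^ 3 := by
  rw [logProfile, abs_of_neg hx1, rpow_def_of_pos hx, show -k * -log x = log x * k by ring]
  field_simp

/-- Gronwall-type differential inequality lemma in the bootstrap regime. -/
theorem stmt11 (β δ K C₀ k K₁ : ℝ) (hβ : 0 < β) (hδ : 0 < δ) (hK : 0 < K)
    (hC₀ : 0 < C₀) (hk : 1 < k) (hK₁ : 1 ≤ K₁) :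
    ∃ Mbar : ℝ, 0 < Mbar ∧ ∃ C' : ℝ, 0 < C' ∧
      ∀ M₀ : ℝ, Mbar ≤ M₀ → ∀ τstar : ℝ, 0 < τstar →
      ∀ ν ν' f f' : ℝ → ℝ,
        (∀ τ ∈ Set.Icc (0 : ℝ) τstar, HasDerivAt ν (ν' τ) τ) →
        (∀ τ ∈ Set.Icc (0 : ℝ) τstar, 0 < ν τ ∧ ν τ < Real.exp (-1)) →
        (∀ τ ∈ Set.Icc (0 : ℝ) τstar,
            (1 / K₁) * Real.exp (-Real.sqrt (β * τ + M₀)) ≤ ν τ ∧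
              ν τ ≤ K₁ * Real.exp (-Real.sqrt (β * τ + M₀))) →
        (∀ τ ∈ Set.Icc (0 : ℝ) τstar, |ν' τ / ν τ| ≤ C₀ / |Real.log (ν τ)|) →
        (∀ τ ∈ Set.Icc (0 : ℝ) τstar, HasDerivAt f (f' τ) τ) →
        (∀ τ ∈ Set.Icc (0 : ℝ) τstar, 0 ≤ f τ) →
        (∀ τ ∈ Set.Icc (0 : ℝ) τstar,
            f' τ ≤ -δ * f τ + K * ν τ ^ k / (Real.log (ν τ)) ^ 2) →
        ∀ τ ∈ Set.Icc (0 : ℝ) τstar,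
          f τ ≤ K * ν τ ^ k / (δ * (Real.log (ν τ)) ^ 2)
              + C' * K * ν τ ^ k / |Real.log (ν τ)| ^ 3
              + f 0 * Real.exp (-δ * τ) := by
  set R := 2 * C₀ * (k + 3) / δ + 1
  have hR : 0 < R + log K₁ := by have := log_nonneg hK₁; positivity
  refine ⟨(R + log K₁) ^ 2, by positivity, 2 * C₀ * (k + 2) / δ ^ 2, by positivity, ?_⟩
  intro M₀ hM₀ τstar _ ν ν' f f' hνd hν hνbd hνr hfd _ hf'
  have hℓ : ∀ t ∈ Icc 0 τstar, 1 ≤ -log (ν t) ∧ 2 * C₀ * (k + 3) ≤ δ * -log (ν t) := by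
    intro t ht
    have hRℓ : R ≤ -log (ν t) := le_neg_log_of_le_mul_exp_neg_sqrt (hν t ht).1 (by linarith)
      (hM₀.trans (by nlinarith [mul_nonneg hβ.le ht.1])) (hνbd t ht).2
    have hfrac : 2 * C₀ * (k + 3) / δ ≤ -log (ν t) - 1 := by linarith
    exact ⟨by linarith [show 0 ≤ 2 * C₀ * (k + 3) / δ by positivity],
      by linarith [(div_le_iff₀' hδ).mp hfrac]⟩
  have hℓℓ' : ∀ t ∈ Icc 0 τstar, -log (ν t) * -(ν' t / ν t) ≤ C₀ := by
    intro t ht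
    have hL : 0 < |log (ν t)| := abs_pos.mpr (by linarith [(hℓ t ht).1])
    calc -log (ν t) * -(ν' t / ν t) ≤ |ν' t / ν t| * |log (ν t)| := by
          rw [← abs_mul]; exact (le_abs_self _).trans_eq' (by ring)
      _ ≤ C₀ := (le_div_iff₀ hL).mp (hνr t ht)
  intro τ hτ
  have := le_logProfile_add_mul_exp (ℓ := fun t => -log (ν t)) (by linarith) hδ hC₀.le hK.le
    (fun t ht => ((hνd t ht).log (hν t ht).1.ne').neg) hℓ hℓℓ' hfd
    (fun t ht => by
      rw [neg_sq, show -k * -log (ν t) = log (ν t) * k by ring, ← rpow_def_of_pos (hν t ht).1]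
      exact hf' t ht) τ hτ
  rwa [mul_logProfile_neg_log (hν τ hτ).1 (by linarith [(hℓ τ hτ).1]), sub_zero] at this
end

section
/- Let β, δ > 0 and k > 1. There exist constants M̄ > 0 and C > 0, depending only on β, δ, k, such that for every M₀ ≥ M̄ and every τ ≥ 0: ∫_0^τ e^{δ s − k√(β s + M₀)} (β s + M₀)^{−3/2} ds ≤ (C/δ) e^{δ τ − k√(β τ + M₀)} (β τ + M₀)^{−3/2}. -/
/-!
Write the integrand as `exp (g s)` with `g s = δ s - k √(β s + M₀) + r log (β s + M₀)`, here
`r = -3/2`. Since `g' s = δ - k β / (2 √(β s + M₀)) + r β / (β s + M₀) ≥ δ / 2` as soon as `M₀` is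
large, the integrand is at most `2 / δ` times the derivative of `exp ∘ g`, and the fundamental
theorem of calculus gives the bound with `C = 2`.
-/

open MeasureTheory Real Set

theorem integral_exp_le_exp_div_of_le_deriv {g g' : ℝ → ℝ} {a b c : ℝ} (hab : a ≤ b) (hc : 0 < c)
    (hcont : ContinuousOn g (Icc a b)) (hderiv : ∀ x ∈ Ioo a b, HasDerivAt g (g' x) x)
    (hle : ∀ x ∈ Ioo a b, c ≤ g' x) :
    ∫ x in a..b, exp (g x) ≤ exp (g b) / c := by
  have hexp_cont : ContinuousOn (fun x => exp (g x)) (Icc a b) := hcont.rexp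
  calc ∫ x in a..b, exp (g x)
      ≤ exp (g b) / c - exp (g a) / c := by
        refine intervalIntegral.integral_le_sub_of_hasDeriv_right_of_le hab
          (hexp_cont.div_const c) (fun x hx => ((hderiv x hx).exp.div_const c).hasDerivWithinAt)
          (hexp_cont.integrableOn_Icc) fun x hx => ?_
        rw [le_div_iff₀ hc]
        exact mul_le_mul_of_nonneg_left (hle x hx) (exp_pos _).le
    _ ≤ exp (g b) / c := sub_le_self _ (div_pos (exp_pos _) hc).le

section

variable {β δ k r M s : ℝ}

theorem hasDerivAt_mul_sub_sqrt_add_log (hu : 0 < β * s + M) :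
    HasDerivAt (fun s => δ * s - k * √(β * s + M) + r * log (β * s + M))
      (δ - k * β / (2 * √(β * s + M)) + r * β / (β * s + M)) s := by
  have hlin : HasDerivAt (fun s => β * s + M) β s := by
    simpa using ((hasDerivAt_id s).const_mul β).add_const M
  refine ((((hasDerivAt_id s).const_mul δ).sub
    (((hasDerivAt_sqrt hu.ne').comp s hlin).const_mul k)).add
    (((hasDerivAt_log hu.ne').comp s hlin).const_mul r)).congr_deriv ?_
  ring

theorem half_le_sub_sqrt_add_div (hδ : 0 < δ) (hβ : 0 ≤ β) (hu : 0 < β * s + M)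
    (hk : (2 * |k| * β / δ) ^ 2 ≤ β * s + M) (hr : 4 * |r| * β / δ ≤ β * s + M) :
    δ / 2 ≤ δ - k * β / (2 * √(β * s + M)) + r * β / (β * s + M) := by
  set u := β * s + M
  have hsqrt : 2 * |k| * β / δ ≤ √u := by
    simpa [abs_of_nonneg (by positivity : 0 ≤ 2 * |k| * β / δ)] using abs_le_sqrt hk
  have hsqrt_pos : 0 < √u := sqrt_pos.2 hu
  have hk' : k * β / (2 * √u) ≤ δ / 4 := by
    rw [div_le_iff₀ (by positivity)]
    rw [div_le_iff₀ hδ] at hsqrt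
    nlinarith [le_abs_self k]
  have hr' : -(r * β / u) ≤ δ / 4 := by
    rw [← neg_div, div_le_iff₀ hu]
    rw [div_le_iff₀ hδ] at hr
    nlinarith [neg_abs_le r]
  linarith

theorem integral_exp_sub_sqrt_mul_rpow_le (hβ : 0 ≤ β) (hδ : 0 < δ) (hM : 0 < M)
    (hkM : (2 * |k| * β / δ) ^ 2 ≤ M) (hrM : 4 * |r| * β / δ ≤ M) {τ : ℝ} (hτ : 0 ≤ τ) :
    ∫ s in Icc 0 τ, exp (δ * s - k * √(β * s + M)) * (β * s + M) ^ r
      ≤ 2 / δ * exp (δ * τ - k * √(β * τ + M)) * (β * τ + M) ^ r := by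
  set g := fun s => δ * s - k * √(β * s + M) + r * log (β * s + M)
  have hMu : ∀ s, 0 ≤ s → M ≤ β * s + M := fun s hs => le_add_of_nonneg_left (by positivity)
  have hu : ∀ s, 0 ≤ s → 0 < β * s + M := fun s hs => hM.trans_le (hMu s hs)
  have hg : ∀ s, 0 ≤ s → exp (δ * s - k * √(β * s + M)) * (β * s + M) ^ r = exp (g s) :=
    fun s hs => by rw [rpow_def_of_pos (hu s hs), ← exp_add, mul_comm (log _)]
  have hderiv : ∀ s ∈ Ici (0 : ℝ), HasDerivAt g
      (δ - k * β / (2 * √(β * s + M)) + r * β / (β * s + M)) s :=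
    fun s hs => hasDerivAt_mul_sub_sqrt_add_log (hu s hs)
  calc ∫ s in Icc 0 τ, exp (δ * s - k * √(β * s + M)) * (β * s + M) ^ r
      = ∫ s in 0..τ, exp (g s) := by
        rw [intervalIntegral.integral_of_le hτ, ← integral_Icc_eq_integral_Ioc]
        exact setIntegral_congr_fun measurableSet_Icc fun s hs => hg s hs.1
    _ ≤ exp (g τ) / (δ / 2) :=
        integral_exp_le_exp_div_of_le_deriv hτ (half_pos hδ)
          (fun s hs => (hderiv s hs.1).continuousAt.continuousWithinAt)
          (fun s hs => hderiv s (le_of_lt hs.1))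
          fun s hs => half_le_sub_sqrt_add_div hδ hβ (hu s hs.1.le)
            (hkM.trans (hMu s hs.1.le)) (hrM.trans (hMu s hs.1.le))
    _ = 2 / δ * exp (δ * τ - k * √(β * τ + M)) * (β * τ + M) ^ r := by
        rw [← hg τ hτ]
        ring

end

theorem stmt12_general (β δ k : ℝ) (hβ : 0 < β) (hδ : 0 < δ) :
    ∃ Mbar : ℝ, 0 < Mbar ∧ ∃ C : ℝ, 0 < C ∧
      ∀ M₀ : ℝ, Mbar ≤ M₀ → ∀ τ : ℝ, 0 ≤ τ →
        (∫ s in Set.Icc (0 : ℝ) τ,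
            Real.exp (δ * s - k * Real.sqrt (β * s + M₀)) * (β * s + M₀) ^ (-(3 : ℝ) / 2))
          ≤ (C / δ) * Real.exp (δ * τ - k * Real.sqrt (β * τ + M₀))
              * (β * τ + M₀) ^ (-(3 : ℝ) / 2) := by
  have h6 : 0 < 6 * β / δ := by positivity
  refine ⟨max ((2 * |k| * β / δ) ^ 2) (6 * β / δ), lt_max_of_lt_right h6, 2, two_pos,
    fun M₀ hM₀ τ hτ => integral_exp_sub_sqrt_mul_rpow_le hβ.le hδ
      (h6.trans_le ((le_max_right _ _).trans hM₀)) ((le_max_left _ _).trans hM₀) ?_ hτ⟩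
  calc 4 * |-(3 : ℝ) / 2| * β / δ = 6 * β / δ := by norm_num [abs_of_pos]
    _ ≤ M₀ := (le_max_right _ _).trans hM₀

/-- integral estimate used to close the bootstrap. -/
theorem stmt12 (β δ k : ℝ) (hβ : 0 < β) (hδ : 0 < δ) (hk : 1 < k) :
    ∃ Mbar : ℝ, 0 < Mbar ∧ ∃ C : ℝ, 0 < C ∧
      ∀ M₀ : ℝ, Mbar ≤ M₀ → ∀ τ : ℝ, 0 ≤ τ →
        (∫ s in Set.Icc (0 : ℝ) τ,
            Real.exp (δ * s - k * Real.sqrt (β * s + M₀)) * (β * s + M₀) ^ (-(3 : ℝ) / 2))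
          ≤ (C / δ) * Real.exp (δ * τ - k * Real.sqrt (β * τ + M₀))
              * (β * τ + M₀) ^ (-(3 : ℝ) / 2) :=
  stmt12_general β δ k hβ hδ
end

section
/- There exists a universal constant C > 0 such that for every b ∈ (0,1] and every ε ∈ C_c^∞(ℝ²), writing γ = |y|: ∫_{ℝ²} ( (1+γ)² ε(y)² + b² γ² (1+γ)⁴ ε(y)² ) e^{−bγ²/2} dy ≤ C ∫_{ℝ²} ( b ε(y)² + |∇ε(y)|² ) (1+γ)⁴ e^{−bγ²/2} dy. -/
open MeasureTheory

noncomputable section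

set_option maxHeartbeats 2000000

lemma e2_sum (y : E2) : (∑ i : Fin 2, (y i) • EuclideanSpace.single i (1:ℝ)) = y := by
  ext j
  simp [EuclideanSpace.single_apply]
  fin_cases j <;> simp

lemma key_ibp (h : E2 → ℝ) (hh : ContDiff ℝ (⊤ : ℕ∞) h) (hc : HasCompactSupport h) :
    2 * ∫ y : E2, h y = - ∫ y : E2, fderiv ℝ h y y := by
  have hdiff : Differentiable ℝ h := hh.differentiable (by simp)
  have hcont := hh.continuous
  have hfc : Continuous (fderiv ℝ h) := hh.continuous_fderiv (by simp)
  have hint : Integrable h := hcont.integrable_of_hasCompactSupport hc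
  have step : ∀ i : Fin 2, ∫ y : E2, h y
      = - ∫ y : E2, (fderiv ℝ h y (EuclideanSpace.single i (1:ℝ))) * y i := by
    intro i
    have hg : Differentiable ℝ (fun y : E2 => y i) :=
      (EuclideanSpace.proj (𝕜 := ℝ) i).differentiable
    have hgf : ∀ y : E2, fderiv ℝ (fun y : E2 => y i) y = EuclideanSpace.proj (𝕜 := ℝ) i := by
      intro y
      exact (EuclideanSpace.proj (𝕜 := ℝ) i).fderiv
    have hsupp1 : HasCompactSupport fun y : E2 =>
        (fderiv ℝ h y (EuclideanSpace.single i (1:ℝ))) * y i := by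
      exact (hc.fderiv_apply ℝ (EuclideanSpace.single i (1:ℝ))).mul_right
    have hcont1 : Continuous fun y : E2 =>
        (fderiv ℝ h y (EuclideanSpace.single i (1:ℝ))) * y i :=
      (hfc.clm_apply continuous_const).mul (PiLp.continuous_apply (p := 2) (β := fun _ : Fin 2 => ℝ) i)
    have hint1 : Integrable fun y : E2 =>
        (fderiv ℝ h y (EuclideanSpace.single i (1:ℝ))) * y i :=
      hcont1.integrable_of_hasCompactSupport hsupp1
    have hint2 : Integrable fun y : E2 => h y * y i :=
      ((hcont.mul (PiLp.continuous_apply (p := 2) (β := fun _ : Fin 2 => ℝ) i)).integrable_of_hasCompactSupport hc.mul_right)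
    have := integral_mul_fderiv_eq_neg_fderiv_mul_of_integrable
      (μ := (volume : Measure E2)) (f := h) (g := fun y : E2 => y i)
      (v := EuclideanSpace.single i (1:ℝ)) hint1 ?_ hint2 (fun x _ => hdiff x) (fun x _ => hg x)
    · rw [← this]
      apply integral_congr_ae
      filter_upwards with y
      rw [hgf y]
      simp [EuclideanSpace.proj]
    · apply Integrable.congr hint
      filter_upwards with y
      rw [hgf y]
      simp [EuclideanSpace.proj]
  have expand : ∀ y : E2, fderiv ℝ h y y
      = ∑ i : Fin 2, (fderiv ℝ h y (EuclideanSpace.single i (1:ℝ))) * y i := by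
    intro y
    calc fderiv ℝ h y y = fderiv ℝ h y (∑ i : Fin 2, (y i) • EuclideanSpace.single i (1:ℝ)) := by
          rw [e2_sum]
      _ = ∑ i : Fin 2, (fderiv ℝ h y (EuclideanSpace.single i (1:ℝ))) * y i := by
          rw [map_sum]
          exact Finset.sum_congr rfl fun i _ => by
            rw [ContinuousLinearMap.map_smul]; simp [mul_comm]
  have hintf : ∀ i : Fin 2, Integrable fun y : E2 =>
      (fderiv ℝ h y (EuclideanSpace.single i (1:ℝ))) * y i := by
    intro i
    refine ((hfc.clm_apply continuous_const).mul
      (PiLp.continuous_apply (p := 2) (β := fun _ : Fin 2 => ℝ) i)).integrable_of_hasCompactSupport ?_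
    exact (hc.fderiv_apply ℝ (EuclideanSpace.single i (1:ℝ))).mul_right
  calc 2 * ∫ y : E2, h y = ∑ i : Fin 2, ∫ y : E2, h y := by simp [Finset.sum_const]
    _ = ∑ i : Fin 2, - ∫ y : E2, (fderiv ℝ h y (EuclideanSpace.single i (1:ℝ))) * y i :=
        Finset.sum_congr rfl fun i _ => step i
    _ = - ∑ i : Fin 2, ∫ y : E2, (fderiv ℝ h y (EuclideanSpace.single i (1:ℝ))) * y i := by
        rw [← Finset.sum_neg_distrib]
    _ = - ∫ y : E2, ∑ i : Fin 2, (fderiv ℝ h y (EuclideanSpace.single i (1:ℝ))) * y i := by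
        rw [integral_finset_sum _ (fun i _ => hintf i)]
    _ = - ∫ y : E2, fderiv ℝ h y y := by
        congr 1
        exact integral_congr_ae (.of_forall fun y => (expand y).symm)

lemma hasFDerivAt_weight (b : ℝ) (y : E2) :
    HasFDerivAt (fun x : E2 => Real.exp (-(b*‖x‖^2)/2))
      (Real.exp (-(b*‖y‖^2)/2) • ((-b) • (innerSL ℝ y))) y := by
  have h0 : HasFDerivAt (fun x : E2 => -(b*‖x‖^2)/2) ((-b) • (innerSL ℝ y)) y := by
    have heq : (fun x : E2 => -(b*‖x‖^2)/2) = fun x : E2 => (-(b/2)) * ‖x‖^2 := by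
      funext x; ring
    rw [heq]
    have h1 := (hasStrictFDerivAt_norm_sq y).hasFDerivAt.const_mul (-(b/2))
    refine h1.congr_fderiv ?_
    ext v
    simp [smul_smul]
    ring
  exact h0.exp

lemma fderiv_h_apply (b : ℝ) {ε : E2 → ℝ} (hε : ContDiff ℝ (⊤ : ℕ∞) ε) (q q' : ℝ → ℝ)
    (hq : ∀ t, HasDerivAt q (q' t) t) (y : E2) :
    fderiv ℝ (fun x : E2 => ε x * (ε x * (q (‖x‖^2) * Real.exp (-(b*‖x‖^2)/2)))) y y
    = 2 * (ε y * fderiv ℝ ε y y) * (q (‖y‖^2) * Real.exp (-(b*‖y‖^2)/2))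
      + (ε y * ε y) * ((2 * q' (‖y‖^2) - b * q (‖y‖^2)) * ‖y‖^2 * Real.exp (-(b*‖y‖^2)/2)) := by
  have hqy : HasFDerivAt (fun x : E2 => q (‖x‖^2)) (q' (‖y‖^2) • (2 • (innerSL ℝ y))) y :=
    (hq (‖y‖^2)).comp_hasFDerivAt y (hasStrictFDerivAt_norm_sq y).hasFDerivAt
  have hw := hasFDerivAt_weight b y
  have hεy : HasFDerivAt ε (fderiv ℝ ε y) y := (hε.differentiable (by simp) y).hasFDerivAt
  have h2 := hεy.fun_mul (hεy.fun_mul (hqy.fun_mul hw))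
  rw [h2.fderiv]
  simp only [ContinuousLinearMap.add_apply, ContinuousLinearMap.smul_apply,
    ContinuousLinearMap.coe_smul', Pi.smul_apply, innerSL_apply_apply, smul_eq_mul,
    real_inner_self_eq_norm_sq]
  ring

lemma div_identity (b : ℝ) {ε : E2 → ℝ} (hε : ContDiff ℝ (⊤ : ℕ∞) ε) (hs : HasCompactSupport ε)
    (q q' : ℝ → ℝ) (hqs : ContDiff ℝ (⊤ : ℕ∞) q) (hq : ∀ t, HasDerivAt q (q' t) t)
    (hq'c : Continuous q') :
    ∫ y : E2, (2 * q (‖y‖^2) + 2*‖y‖^2 * q' (‖y‖^2) - b * ‖y‖^2 * q (‖y‖^2))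
        * ((ε y)^2 * Real.exp (-(b*‖y‖^2)/2))
    = -2 * ∫ y : E2, (ε y * fderiv ℝ ε y y) * (q (‖y‖^2) * Real.exp (-(b*‖y‖^2)/2)) := by
  have hεc := hε.continuous
  have hfc : Continuous (fderiv ℝ ε) := hε.continuous_fderiv (by simp)
  have hF : Continuous (fun y : E2 => fderiv ℝ ε y y) := hfc.clm_apply continuous_id
  have hnorm : ContDiff ℝ (⊤ : ℕ∞) (fun y : E2 => ‖y‖^2) := contDiff_norm_sq ℝ
  have hnc : Continuous (fun y : E2 => ‖y‖^2) := hnorm.continuous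
  have hwsm : ContDiff ℝ (⊤ : ℕ∞) (fun y : E2 => Real.exp (-(b*‖y‖^2)/2)) := by
    apply Real.contDiff_exp.comp
    exact ((contDiff_const.mul hnorm).neg.div_const 2)
  have hwc : Continuous (fun y : E2 => Real.exp (-(b*‖y‖^2)/2)) := hwsm.continuous
  set h : E2 → ℝ := fun y => ε y * (ε y * (q (‖y‖^2) * Real.exp (-(b*‖y‖^2)/2))) with hdef
  have hh : ContDiff ℝ (⊤ : ℕ∞) h := hε.mul (hε.mul ((hqs.comp hnorm).mul hwsm))
  have hcs : HasCompactSupport h := hs.mul_right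
  have hcB : Continuous (fun y : E2 =>
      (ε y * fderiv ℝ ε y y) * (q (‖y‖^2) * Real.exp (-(b*‖y‖^2)/2))) :=
    ((hεc.mul hF).mul ((hqs.continuous.comp hnc).mul hwc))
  have hsB : HasCompactSupport (fun y : E2 =>
      (ε y * fderiv ℝ ε y y) * (q (‖y‖^2) * Real.exp (-(b*‖y‖^2)/2))) := by
    have h1 : HasCompactSupport (fun y : E2 => ε y * fderiv ℝ ε y y) := hs.mul_right
    exact h1.mul_right
  have hiB : Integrable (fun y : E2 =>
      (ε y * fderiv ℝ ε y y) * (q (‖y‖^2) * Real.exp (-(b*‖y‖^2)/2))) :=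
    hcB.integrable_of_hasCompactSupport hsB
  have hcC : Continuous (fun y : E2 => (ε y * ε y)
      * ((2 * q' (‖y‖^2) - b * q (‖y‖^2)) * ‖y‖^2 * Real.exp (-(b*‖y‖^2)/2))) := by
    apply (hεc.mul hεc).mul
    apply Continuous.mul
    apply Continuous.mul
    · exact (continuous_const.mul (hq'c.comp hnc)).sub (continuous_const.mul (hqs.continuous.comp hnc))
    · exact hnc
    · exact hwc
  have hsC : HasCompactSupport (fun y : E2 => (ε y * ε y)
      * ((2 * q' (‖y‖^2) - b * q (‖y‖^2)) * ‖y‖^2 * Real.exp (-(b*‖y‖^2)/2))) :=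
    HasCompactSupport.mul_right (hs.mul_right)
  have hiC : Integrable (fun y : E2 => (ε y * ε y)
      * ((2 * q' (‖y‖^2) - b * q (‖y‖^2)) * ‖y‖^2 * Real.exp (-(b*‖y‖^2)/2))) :=
    hcC.integrable_of_hasCompactSupport hsC
  have hih : Integrable h := hh.continuous.integrable_of_hasCompactSupport hcs
  have hibp := key_ibp h hh hcs
  have hexpand : ∫ y : E2, fderiv ℝ h y y
      = 2 * (∫ y : E2, (ε y * fderiv ℝ ε y y) * (q (‖y‖^2) * Real.exp (-(b*‖y‖^2)/2)))
        + ∫ y : E2, (ε y * ε y)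
            * ((2 * q' (‖y‖^2) - b * q (‖y‖^2)) * ‖y‖^2 * Real.exp (-(b*‖y‖^2)/2)) := by
    rw [← MeasureTheory.integral_const_mul, ← integral_add (hiB.const_mul 2) hiC]
    apply integral_congr_ae
    filter_upwards with y
    rw [hdef, fderiv_h_apply b hε q q' hq y]
    ring
  have hlhs : ∫ y : E2, (2 * q (‖y‖^2) + 2*‖y‖^2 * q' (‖y‖^2) - b * ‖y‖^2 * q (‖y‖^2))
        * ((ε y)^2 * Real.exp (-(b*‖y‖^2)/2))
      = 2 * (∫ y : E2, h y)
        + ∫ y : E2, (ε y * ε y)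
            * ((2 * q' (‖y‖^2) - b * q (‖y‖^2)) * ‖y‖^2 * Real.exp (-(b*‖y‖^2)/2)) := by
    rw [← MeasureTheory.integral_const_mul, ← integral_add (hih.const_mul 2) hiC]
    apply integral_congr_ae
    filter_upwards with y
    simp only [hdef]
    ring
  rw [hlhs, hibp, hexpand]
  ring

lemma ptwise1 (e f g γ w : ℝ) (hγ : 0 ≤ γ) (hg : 0 ≤ g) (hw : 0 ≤ w) (hf : |f| ≤ g * γ) :
    (-2) * (e * f * ((1+γ^2) * w)) ≤ (1/2) * ((1+γ)^2 * (e^2 * w)) + 2 * ((1+γ)^4 * (g^2 * w)) := by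
  have key : (-2) * (e * f * (1+γ^2)) ≤ (1/2) * ((1+γ)^2 * e^2) + 2 * ((1+γ)^4 * g^2) := by
    have h0 : (0:ℝ) < 1 + γ^2 := by positivity
    have h1 : -(e * f * (1+γ^2)) ≤ |e| * (g*γ) * (1+γ^2) := by
      calc -(e * f * (1+γ^2)) ≤ |e * f * (1+γ^2)| := neg_le_abs _
        _ = |e| * |f| * (1+γ^2) := by
            rw [abs_mul, abs_mul, abs_of_pos h0]
        _ ≤ |e| * (g*γ) * (1+γ^2) := by
            apply mul_le_mul_of_nonneg_right _ h0.le
            exact mul_le_mul_of_nonneg_left hf (abs_nonneg e)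
    nlinarith [sq_nonneg (|e| - 2*g*(1+γ)), sq_nonneg (1+γ), abs_nonneg e, sq_abs e,
      mul_nonneg (abs_nonneg e) hg, mul_nonneg (mul_nonneg (abs_nonneg e) hg) hγ,
      mul_nonneg (mul_nonneg (mul_nonneg (abs_nonneg e) hg) hγ) hγ,
      mul_nonneg (sq_nonneg (|e| - 2*g*(1+γ))) hγ,
      mul_nonneg (mul_nonneg (sq_nonneg (|e| - 2*g*(1+γ))) hγ) hγ]
  calc (-2) * (e * f * ((1+γ^2) * w)) = ((-2) * (e * f * (1+γ^2))) * w := by ring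
    _ ≤ ((1/2) * ((1+γ)^2 * e^2) + 2 * ((1+γ)^4 * g^2)) * w := mul_le_mul_of_nonneg_right key hw
    _ = (1/2) * ((1+γ)^2 * (e^2 * w)) + 2 * ((1+γ)^4 * (g^2 * w)) := by ring

lemma ptwise2 (e f g γ w b : ℝ) (hγ : 0 ≤ γ) (hg : 0 ≤ g) (hw : 0 ≤ w) (hb : 0 ≤ b)
    (hf : |f| ≤ g * γ) :
    2 * (e * f * (b*(1+γ^2)^2 * w))
      ≤ (1/2) * (b^2*γ^2*(1+γ^2)^2 * (e^2 * w)) + 2 * ((1+γ)^4 * (g^2 * w)) := by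
  have key : 2 * (e * f * (b*(1+γ^2)^2))
      ≤ (1/2) * (b^2*γ^2*(1+γ^2)^2 * e^2) + 2 * ((1+γ)^4 * g^2) := by
    have h0 : (0:ℝ) < (1+γ^2)^2 := by positivity
    have h1 : e * f * (b*(1+γ^2)^2) ≤ |e| * (g*γ) * (b*(1+γ^2)^2) := by
      calc e * f * (b*(1+γ^2)^2) ≤ |e * f * (b*(1+γ^2)^2)| := le_abs_self _
        _ = |e| * |f| * (|b| * (1+γ^2)^2) := by
            rw [abs_mul, abs_mul, abs_mul, abs_of_pos h0, mul_assoc]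
        _ = |e| * |f| * (b*(1+γ^2)^2) := by rw [abs_of_nonneg hb]
        _ ≤ |e| * (g*γ) * (b*(1+γ^2)^2) := by
            apply mul_le_mul_of_nonneg_right _ (by positivity)
            exact mul_le_mul_of_nonneg_left hf (abs_nonneg e)
    have h2 : (1+γ^2)^2 ≤ (1+γ)^4 := by nlinarith [sq_nonneg γ, sq_nonneg (1+γ), hγ]
    have h3 : 2 * (|e| * (g*γ) * (b*(1+γ^2)^2))
        ≤ (1/2) * (b^2*γ^2*(1+γ^2)^2 * |e|^2) + 2 * ((1+γ^2)^2 * g^2) := by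
      nlinarith [mul_nonneg (sq_nonneg (1+γ^2)) (sq_nonneg (b*γ*|e| - 2*g))]
    have h4 := mul_le_mul_of_nonneg_right h2 (sq_nonneg g)
    rw [sq_abs] at h3
    linarith [h1, h3, h4]
  calc 2 * (e * f * (b*(1+γ^2)^2 * w)) = (2 * (e * f * (b*(1+γ^2)^2))) * w := by ring
    _ ≤ ((1/2) * (b^2*γ^2*(1+γ^2)^2 * e^2) + 2 * ((1+γ)^4 * g^2)) * w :=
        mul_le_mul_of_nonneg_right key hw
    _ = (1/2) * (b^2*γ^2*(1+γ^2)^2 * (e^2 * w)) + 2 * ((1+γ)^4 * (g^2 * w)) := by ring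

lemma integrable_of_eps {ε : E2 → ℝ} (hs : HasCompactSupport ε) {f : E2 → ℝ}
    (hc : Continuous f) (hf : ∀ y, ε y = 0 → f y = 0) : Integrable f := by
  apply hc.integrable_of_hasCompactSupport
  apply hs.mono'
  intro y hy
  apply subset_closure
  simp only [Function.mem_support] at hy ⊢
  exact fun h0 => hy (hf y h0)

lemma integrable_of_fderiv {ε : E2 → ℝ} (hs : HasCompactSupport ε) {f : E2 → ℝ}
    (hc : Continuous f) (hf : ∀ y, fderiv ℝ ε y = 0 → f y = 0) : Integrable f := by
  apply hc.integrable_of_hasCompactSupport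
  apply (hs.fderiv ℝ).mono'
  intro y hy
  apply subset_closure
  simp only [Function.mem_support] at hy ⊢
  exact fun h0 => hy (hf y h0)

/-- Hardy–Poincaré type inequality with Gaussian weight. -/
theorem stmt19 :
    ∃ C : ℝ, 0 < C ∧
      ∀ b : ℝ, b ∈ Set.Ioc (0 : ℝ) 1 →
      ∀ ε : E2 → ℝ, ContDiff ℝ (⊤ : ℕ∞) ε → HasCompactSupport ε →
        (∫ y : E2,
            ((1 + ‖y‖) ^ 2 * (ε y) ^ 2 + b ^ 2 * ‖y‖ ^ 2 * (1 + ‖y‖) ^ 4 * (ε y) ^ 2)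
              * Real.exp (-(b * ‖y‖ ^ 2) / 2))
          ≤ C * ∫ y : E2,
              (b * (ε y) ^ 2 + ‖gradient ε y‖ ^ 2) * (1 + ‖y‖) ^ 4
                * Real.exp (-(b * ‖y‖ ^ 2) / 2) := by
  refine ⟨50, by norm_num, ?_⟩
  rintro b ⟨hb0, hb1⟩ ε hε hs
  have hεc := hε.continuous
  have hfc : Continuous (fderiv ℝ ε) := hε.continuous_fderiv (by simp)
  have hFc : Continuous (fun y : E2 => fderiv ℝ ε y y) := hfc.clm_apply continuous_id
  have hGeq : ∀ y : E2, ‖gradient ε y‖ = ‖fderiv ℝ ε y‖ := fun y =>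
    LinearIsometryEquiv.norm_map _ _
  have hGc : Continuous fun y : E2 => ‖gradient ε y‖ :=
    hfc.norm.congr fun y => (hGeq y).symm
  have hFG : ∀ y : E2, |fderiv ℝ ε y y| ≤ ‖gradient ε y‖ * ‖y‖ := fun y => by
    rw [hGeq y, ← Real.norm_eq_abs]
    exact (fderiv ℝ ε y).le_opNorm y
  have hn : Continuous fun y : E2 => ‖y‖ := continuous_norm
  have hn2 : Continuous fun y : E2 => ‖y‖^2 := hn.pow 2
  have hwc : Continuous fun y : E2 => Real.exp (-(b*‖y‖^2)/2) :=
    Real.continuous_exp.comp (((continuous_const.mul hn2).neg).div_const 2)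
  have hPc : Continuous fun y : E2 => (ε y)^2 * Real.exp (-(b*‖y‖^2)/2) :=
    (hεc.pow 2).mul hwc
  -- integrability of all players
  have iI : Integrable fun y : E2 => (1+‖y‖)^2 * ((ε y)^2 * Real.exp (-(b*‖y‖^2)/2)) :=
    integrable_of_eps hs (((continuous_const.add hn).pow 2).mul hPc) (fun y h => by simp [h])
  have iJ : Integrable fun y : E2 =>
      b^2*‖y‖^2*(1+‖y‖)^4 * ((ε y)^2 * Real.exp (-(b*‖y‖^2)/2)) :=
    integrable_of_eps hs (((((continuous_const.mul hn2)).mul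
      ((continuous_const.add hn).pow 4))).mul hPc) (fun y h => by simp [h])
  have iK : Integrable fun y : E2 => b*(1+‖y‖)^4 * ((ε y)^2 * Real.exp (-(b*‖y‖^2)/2)) :=
    integrable_of_eps hs ((continuous_const.mul ((continuous_const.add hn).pow 4)).mul hPc)
      (fun y h => by simp [h])
  have iL : Integrable fun y : E2 =>
      (1+‖y‖)^4 * (‖gradient ε y‖^2 * Real.exp (-(b*‖y‖^2)/2)) := by
    refine integrable_of_fderiv hs (((continuous_const.add hn).pow 4).mul
      ((hGc.pow 2).mul hwc)) (fun y h => ?_)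
    have hg0 : gradient ε y = 0 := by
      unfold gradient
      rw [h]
      simp
    simp [hg0]
  have iJ' : Integrable fun y : E2 =>
      b^2*‖y‖^2*(1+‖y‖^2)^2 * ((ε y)^2 * Real.exp (-(b*‖y‖^2)/2)) :=
    integrable_of_eps hs ((((continuous_const.mul hn2)).mul
      ((continuous_const.add hn2).pow 2)).mul hPc) (fun y h => by simp [h])
  have iD1 : Integrable fun y : E2 =>
      (2 + 4*‖y‖^2 - b*‖y‖^2*(1+‖y‖^2)) * ((ε y)^2 * Real.exp (-(b*‖y‖^2)/2)) :=
    integrable_of_eps hs (((continuous_const.add (continuous_const.mul hn2)).sub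
      ((continuous_const.mul hn2).mul (continuous_const.add hn2))).mul hPc)
      (fun y h => by simp [h])
  have if9 : Integrable fun y : E2 =>
      (2*(b*(1+‖y‖^2)^2) + 4*b*‖y‖^2*(1+‖y‖^2)) * ((ε y)^2 * Real.exp (-(b*‖y‖^2)/2)) :=
    integrable_of_eps hs (((continuous_const.mul
      (continuous_const.mul ((continuous_const.add hn2).pow 2))).add
      ((continuous_const.mul hn2).mul (continuous_const.add hn2))).mul hPc)
      (fun y h => by simp [h])
  have iX1 : Integrable fun y : E2 =>
      (ε y * fderiv ℝ ε y y) * ((1+‖y‖^2) * Real.exp (-(b*‖y‖^2)/2)) :=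
    integrable_of_eps hs ((hεc.mul hFc).mul ((continuous_const.add hn2).mul hwc))
      (fun y h => by simp [h])
  have iX2 : Integrable fun y : E2 =>
      (ε y * fderiv ℝ ε y y) * (b*(1+‖y‖^2)^2 * Real.exp (-(b*‖y‖^2)/2)) :=
    integrable_of_eps hs ((hεc.mul hFc).mul
      ((continuous_const.mul ((continuous_const.add hn2).pow 2)).mul hwc))
      (fun y h => by simp [h])
  -- the two divergence identities
  have id1 : ∫ y : E2, (2 + 4*‖y‖^2 - b*‖y‖^2*(1+‖y‖^2))
        * ((ε y)^2 * Real.exp (-(b*‖y‖^2)/2))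
      = -2 * ∫ y : E2, (ε y * fderiv ℝ ε y y) * ((1+‖y‖^2) * Real.exp (-(b*‖y‖^2)/2)) := by
    have h := div_identity b hε hs (fun t => 1+t) (fun _ => (1:ℝ))
      (contDiff_const.add contDiff_id)
      (fun t => by simpa using (hasDerivAt_id t).const_add 1) continuous_const
    rw [← h]
    apply integral_congr_ae
    filter_upwards with y
    ring
  have id2 : ∫ y : E2, ((2*(b*(1+‖y‖^2)^2) + 4*b*‖y‖^2*(1+‖y‖^2))
          - b^2*‖y‖^2*(1+‖y‖^2)^2) * ((ε y)^2 * Real.exp (-(b*‖y‖^2)/2))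
      = -2 * ∫ y : E2, (ε y * fderiv ℝ ε y y)
          * (b*(1+‖y‖^2)^2 * Real.exp (-(b*‖y‖^2)/2)) := by
    have hq2 : ∀ t : ℝ, HasDerivAt (fun t : ℝ => b*(1+t)^2) (b*(2*(1+t))) t := by
      intro t
      have h1 : HasDerivAt (fun t : ℝ => (1+t)^2) (2*(1+t)) t := by
        simpa using ((hasDerivAt_id t).const_add 1).fun_pow 2
      exact h1.const_mul b
    have h := div_identity b hε hs (fun t => b*(1+t)^2) (fun t => b*(2*(1+t)))
      (contDiff_const.mul ((contDiff_const.add contDiff_id).pow 2)) hq2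
      (continuous_const.mul (continuous_const.mul (continuous_const.add continuous_id)))
    rw [← h]
    apply integral_congr_ae
    filter_upwards with y
    ring
  -- names
  set I := ∫ y : E2, (1+‖y‖)^2 * ((ε y)^2 * Real.exp (-(b*‖y‖^2)/2)) with hIdef
  set J := ∫ y : E2, b^2*‖y‖^2*(1+‖y‖)^4 * ((ε y)^2 * Real.exp (-(b*‖y‖^2)/2)) with hJdef
  set K := ∫ y : E2, b*(1+‖y‖)^4 * ((ε y)^2 * Real.exp (-(b*‖y‖^2)/2)) with hKdef
  set L := ∫ y : E2, (1+‖y‖)^4 * (‖gradient ε y‖^2 * Real.exp (-(b*‖y‖^2)/2)) with hLdef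
  set J' := ∫ y : E2, b^2*‖y‖^2*(1+‖y‖^2)^2 * ((ε y)^2 * Real.exp (-(b*‖y‖^2)/2)) with hJ'def
  set X1 := ∫ y : E2, (ε y * fderiv ℝ ε y y) * ((1+‖y‖^2) * Real.exp (-(b*‖y‖^2)/2)) with hX1def
  set X2 := ∫ y : E2, (ε y * fderiv ℝ ε y y)
      * (b*(1+‖y‖^2)^2 * Real.exp (-(b*‖y‖^2)/2)) with hX2def
  have hK0 : 0 ≤ K := integral_nonneg fun y => by positivity
  have hL0 : 0 ≤ L := integral_nonneg fun y => by positivity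
  -- Step 1 : I ≤ -2*X1 + K
  have step1 : I ≤ -2*X1 + K := by
    have hmono : I ≤ ∫ y : E2,
        ((2 + 4*‖y‖^2 - b*‖y‖^2*(1+‖y‖^2)) * ((ε y)^2 * Real.exp (-(b*‖y‖^2)/2))
          + b*(1+‖y‖)^4 * ((ε y)^2 * Real.exp (-(b*‖y‖^2)/2))) := by
      refine integral_mono iI (iD1.add iK) fun y => ?_
      have hP : (0:ℝ) ≤ (ε y)^2 * Real.exp (-(b*‖y‖^2)/2) := by positivity
      have hγ := norm_nonneg y
      have hcoef : (1+‖y‖)^2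
          ≤ (2 + 4*‖y‖^2 - b*‖y‖^2*(1+‖y‖^2)) + b*(1+‖y‖)^4 := by
        nlinarith [sq_nonneg (1-‖y‖), mul_nonneg hb0.le hγ,
          mul_nonneg (mul_nonneg hb0.le hγ) hγ,
          mul_nonneg (mul_nonneg (mul_nonneg hb0.le hγ) hγ) hγ, sq_nonneg ‖y‖]
      calc (1+‖y‖)^2 * ((ε y)^2 * Real.exp (-(b*‖y‖^2)/2))
          ≤ ((2 + 4*‖y‖^2 - b*‖y‖^2*(1+‖y‖^2)) + b*(1+‖y‖)^4)
            * ((ε y)^2 * Real.exp (-(b*‖y‖^2)/2)) := mul_le_mul_of_nonneg_right hcoef hP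
        _ = (2 + 4*‖y‖^2 - b*‖y‖^2*(1+‖y‖^2)) * ((ε y)^2 * Real.exp (-(b*‖y‖^2)/2))
            + b*(1+‖y‖)^4 * ((ε y)^2 * Real.exp (-(b*‖y‖^2)/2)) := by ring
    rw [integral_add iD1 iK, id1] at hmono
    exact hmono
  -- Step 2 : -2*X1 ≤ (1/2)*I + 2*L
  have step2 : -2*X1 ≤ (1/2)*I + 2*L := by
    have h1 : -2*X1 = ∫ y : E2,
        (-2) * ((ε y * fderiv ℝ ε y y) * ((1+‖y‖^2) * Real.exp (-(b*‖y‖^2)/2))) := by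
      rw [MeasureTheory.integral_const_mul]
    have h2 : (∫ y : E2,
        (-2) * ((ε y * fderiv ℝ ε y y) * ((1+‖y‖^2) * Real.exp (-(b*‖y‖^2)/2))))
        ≤ ∫ y : E2,
          ((1/2) * ((1+‖y‖)^2 * ((ε y)^2 * Real.exp (-(b*‖y‖^2)/2)))
            + 2 * ((1+‖y‖)^4 * (‖gradient ε y‖^2 * Real.exp (-(b*‖y‖^2)/2)))) := by
      refine integral_mono (iX1.const_mul _) ((iI.const_mul _).add (iL.const_mul _)) fun y => ?_
      exact ptwise1 (ε y) (fderiv ℝ ε y y) ‖gradient ε y‖ ‖y‖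
        (Real.exp (-(b*‖y‖^2)/2)) (norm_nonneg y) (norm_nonneg _) (Real.exp_nonneg _) (hFG y)
    rw [integral_add (iI.const_mul _) (iL.const_mul _), MeasureTheory.integral_const_mul,
      MeasureTheory.integral_const_mul, MeasureTheory.integral_const_mul] at h2
    linarith [h1 ▸ h2]
  have hI : I ≤ 2*K + 4*L := by linarith
  -- Step 3 : J ≤ 4*J'
  have step3 : J ≤ 4*J' := by
    have hmono : J ≤ ∫ y : E2,
        4 * (b^2*‖y‖^2*(1+‖y‖^2)^2 * ((ε y)^2 * Real.exp (-(b*‖y‖^2)/2))) := by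
      refine integral_mono iJ (iJ'.const_mul 4) fun y => ?_
      have hP : (0:ℝ) ≤ (ε y)^2 * Real.exp (-(b*‖y‖^2)/2) := by positivity
      have hγ := norm_nonneg y
      have hcoef : b^2*‖y‖^2*(1+‖y‖)^4 ≤ 4*(b^2*‖y‖^2*(1+‖y‖^2)^2) := by
        nlinarith [sq_nonneg (1-‖y‖), sq_nonneg (b*‖y‖), sq_nonneg ‖y‖,
          mul_nonneg (sq_nonneg (b*‖y‖)) (sq_nonneg (1-‖y‖)),
          mul_nonneg (mul_nonneg (sq_nonneg (b*‖y‖)) (sq_nonneg (1-‖y‖))) hγ,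
          mul_nonneg (mul_nonneg (mul_nonneg (sq_nonneg (b*‖y‖)) (sq_nonneg (1-‖y‖))) hγ) hγ]
      calc b^2*‖y‖^2*(1+‖y‖)^4 * ((ε y)^2 * Real.exp (-(b*‖y‖^2)/2))
          ≤ (4*(b^2*‖y‖^2*(1+‖y‖^2)^2)) * ((ε y)^2 * Real.exp (-(b*‖y‖^2)/2)) :=
            mul_le_mul_of_nonneg_right hcoef hP
        _ = 4 * (b^2*‖y‖^2*(1+‖y‖^2)^2 * ((ε y)^2 * Real.exp (-(b*‖y‖^2)/2))) := by ring
    rw [MeasureTheory.integral_const_mul] at hmono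
    exact hmono
  -- Step 4 : J' = ∫ f9 + 2*X2
  have step4 : J' = (∫ y : E2, (2*(b*(1+‖y‖^2)^2) + 4*b*‖y‖^2*(1+‖y‖^2))
      * ((ε y)^2 * Real.exp (-(b*‖y‖^2)/2))) + 2*X2 := by
    have hsub : ∫ y : E2, ((2*(b*(1+‖y‖^2)^2) + 4*b*‖y‖^2*(1+‖y‖^2))
          - b^2*‖y‖^2*(1+‖y‖^2)^2) * ((ε y)^2 * Real.exp (-(b*‖y‖^2)/2))
        = (∫ y : E2, (2*(b*(1+‖y‖^2)^2) + 4*b*‖y‖^2*(1+‖y‖^2))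
            * ((ε y)^2 * Real.exp (-(b*‖y‖^2)/2))) - J' := by
      rw [hJ'def, ← integral_sub if9 iJ']
      apply integral_congr_ae
      filter_upwards with y
      ring
    rw [hsub] at id2
    linarith
  -- Step 5 : ∫ f9 ≤ 6*K
  have step5 : (∫ y : E2, (2*(b*(1+‖y‖^2)^2) + 4*b*‖y‖^2*(1+‖y‖^2))
      * ((ε y)^2 * Real.exp (-(b*‖y‖^2)/2))) ≤ 6*K := by
    have hmono : (∫ y : E2, (2*(b*(1+‖y‖^2)^2) + 4*b*‖y‖^2*(1+‖y‖^2))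
        * ((ε y)^2 * Real.exp (-(b*‖y‖^2)/2)))
        ≤ ∫ y : E2, 6 * (b*(1+‖y‖)^4 * ((ε y)^2 * Real.exp (-(b*‖y‖^2)/2))) := by
      refine integral_mono if9 (iK.const_mul 6) fun y => ?_
      have hP : (0:ℝ) ≤ (ε y)^2 * Real.exp (-(b*‖y‖^2)/2) := by positivity
      have hγ := norm_nonneg y
      have hcoef : 2*(b*(1+‖y‖^2)^2) + 4*b*‖y‖^2*(1+‖y‖^2) ≤ 6*(b*(1+‖y‖)^4) := by
        nlinarith [mul_nonneg hb0.le hγ, sq_nonneg ‖y‖,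
          mul_nonneg (mul_nonneg hb0.le hγ) hγ,
          mul_nonneg (mul_nonneg (mul_nonneg hb0.le hγ) hγ) hγ,
          mul_nonneg (mul_nonneg (mul_nonneg (mul_nonneg hb0.le hγ) hγ) hγ) hγ]
      calc (2*(b*(1+‖y‖^2)^2) + 4*b*‖y‖^2*(1+‖y‖^2)) * ((ε y)^2 * Real.exp (-(b*‖y‖^2)/2))
          ≤ (6*(b*(1+‖y‖)^4)) * ((ε y)^2 * Real.exp (-(b*‖y‖^2)/2)) :=
            mul_le_mul_of_nonneg_right hcoef hP
        _ = 6 * (b*(1+‖y‖)^4 * ((ε y)^2 * Real.exp (-(b*‖y‖^2)/2))) := by ring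
    rw [MeasureTheory.integral_const_mul] at hmono
    exact hmono
  -- Step 6 : 2*X2 ≤ (1/2)*J' + 2*L
  have step6 : 2*X2 ≤ (1/2)*J' + 2*L := by
    have h1 : 2*X2 = ∫ y : E2,
        2 * ((ε y * fderiv ℝ ε y y) * (b*(1+‖y‖^2)^2 * Real.exp (-(b*‖y‖^2)/2))) := by
      rw [MeasureTheory.integral_const_mul]
    have h2 : (∫ y : E2,
        2 * ((ε y * fderiv ℝ ε y y) * (b*(1+‖y‖^2)^2 * Real.exp (-(b*‖y‖^2)/2))))
        ≤ ∫ y : E2,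
          ((1/2) * (b^2*‖y‖^2*(1+‖y‖^2)^2 * ((ε y)^2 * Real.exp (-(b*‖y‖^2)/2)))
            + 2 * ((1+‖y‖)^4 * (‖gradient ε y‖^2 * Real.exp (-(b*‖y‖^2)/2)))) := by
      refine integral_mono (iX2.const_mul _) ((iJ'.const_mul _).add (iL.const_mul _)) fun y => ?_
      exact ptwise2 (ε y) (fderiv ℝ ε y y) ‖gradient ε y‖ ‖y‖
        (Real.exp (-(b*‖y‖^2)/2)) b (norm_nonneg y) (norm_nonneg _) (Real.exp_nonneg _)
        hb0.le (hFG y)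
    rw [integral_add (iJ'.const_mul _) (iL.const_mul _), MeasureTheory.integral_const_mul,
      MeasureTheory.integral_const_mul, MeasureTheory.integral_const_mul] at h2
    linarith [h1 ▸ h2]
  have hJ' : J' ≤ 12*K + 4*L := by linarith
  have hJ : J ≤ 48*K + 16*L := by linarith
  -- final assembly
  have hLHS : (∫ y : E2,
      ((1 + ‖y‖) ^ 2 * (ε y) ^ 2 + b ^ 2 * ‖y‖ ^ 2 * (1 + ‖y‖) ^ 4 * (ε y) ^ 2)
        * Real.exp (-(b * ‖y‖ ^ 2) / 2)) = I + J := by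
    rw [hIdef, hJdef, ← integral_add iI iJ]
    apply integral_congr_ae
    filter_upwards with y
    ring
  have hRHS : (∫ y : E2,
      (b * (ε y) ^ 2 + ‖gradient ε y‖ ^ 2) * (1 + ‖y‖) ^ 4
        * Real.exp (-(b * ‖y‖ ^ 2) / 2)) = K + L := by
    rw [hKdef, hLdef, ← integral_add iK iL]
    apply integral_congr_ae
    filter_upwards with y
    ring
  rw [hLHS, hRHS]
  linarith
end
end
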